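/- arXiv:1909.07024 — 3 statements merged into one kernel-verified Lean document; each statement's English description precedes it below -/
import Mathlib

section
/- The homology of a stabilization equals the homology of the original DGA: for any DGA (A, ∂) and any degree i, the inclusion A → A * E^i into the degree-i algebraic stabilization induces an isomorphism on homology. -/
/- Free unital associative ℤ-algebra on a type `X` of generators,
realized as the monoid algebra of the free monoid on `X`. -/
noncomputable section

abbrev FAlg (X : Type) : Type := MonoidAlgebra ℤ (FreeMonoid X)

/-- The generator `x` as an element of the free algebra. -/
def fgen {X : Type} (x : X) : FAlg X :=
  MonoidAlgebra.of ℤ (FreeMonoid X) (FreeMonoid.of x)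

/-- Degree of a word, given degrees of the generators. -/
def wdeg {X : Type} (deg : X → ℤ) (w : FreeMonoid X) : ℤ :=
  ((FreeMonoid.toList w).map deg).sum

/-- An element is homogeneous of degree `d` if every word in its support has degree `d`. -/
def Homog {X : Type} (deg : X → ℤ) (d : ℤ) (a : FAlg X) : Prop :=
  ∀ w ∈ a.coeff.support, wdeg deg w = d

/-- The sign `(-1)^d` for an integer degree `d`. -/
def sgn (d : ℤ) : ℤ := (((-1 : ℤˣ) ^ d : ℤˣ) : ℤ)

/-- The signed Leibniz rule `∂(vw) = (∂v)w + (-1)^(deg v) v (∂w)` for homogeneous `v`. -/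
def IsLeibniz {X : Type} (deg : X → ℤ) (D : FAlg X →ₗ[ℤ] FAlg X) : Prop :=
  ∀ (d : ℤ) (v w : FAlg X), Homog deg d v →
    D (v * w) = D v * w + sgn d • (v * D w)

/-- `D` has degree `-1`: it sends homogeneous elements of degree `d` to degree `d - 1`. -/
def LowersDeg {X : Type} (deg : X → ℤ) (D : FAlg X →ₗ[ℤ] FAlg X) : Prop :=
  ∀ (d : ℤ) (v : FAlg X), Homog deg d v → Homog deg (d - 1) (D v)

/-- A differential graded algebra: a free graded ℤ-algebra on finitely many
generators with a degree `-1` differential satisfying the signed Leibniz rule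
and `∂ ∘ ∂ = 0`. -/
structure DGA where
  n : ℕ
  deg : Fin n → ℤ
  D : FAlg (Fin n) →ₗ[ℤ] FAlg (Fin n)
  leibniz : IsLeibniz deg D
  lowers : LowersDeg deg D
  dsq : ∀ a, D (D a) = 0

/-- An elementary isomorphism: a graded chain algebra map sending one generator
`aᵢ` to `α aᵢ + v` (`α` a unit) and fixing all other generators. -/
def IsElementary (A B : DGA) (φ : FAlg (Fin A.n) →ₐ[ℤ] FAlg (Fin B.n)) : Prop :=
  ∃ hn : A.n = B.n,
    (∀ (d : ℤ) (v : FAlg (Fin A.n)), Homog A.deg d v → Homog B.deg d (φ v)) ∧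
    (∀ a, φ (A.D a) = B.D (φ a)) ∧
    ∃ i : Fin A.n,
      (∃ (α : (FAlg (Fin B.n))ˣ) (v : FAlg (Fin B.n)),
        φ (fgen i) = (α : FAlg (Fin B.n)) * fgen (Fin.cast hn i) + v) ∧
      ∀ j : Fin A.n, j ≠ i → φ (fgen j) = fgen (Fin.cast hn j)

def ElemRel (A B : DGA) : Prop := ∃ φ, IsElementary A B φ

/-- A tame isomorphism is a finite composition of elementary isomorphisms. -/
def TameIso : DGA → DGA → Prop := Relation.ReflTransGen ElemRel

def stabEmbFin (A B : DGA) (hn : B.n = A.n + 2) : Fin A.n → Fin B.n :=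
  fun j => Fin.cast hn.symm (Fin.castAdd 2 j)

/-- The inclusion of the free algebra induced by the inclusion of generators. -/
def stabMap (A B : DGA) (hn : B.n = A.n + 2) : FAlg (Fin A.n) → FAlg (Fin B.n) :=
  MonoidAlgebra.mapDomain (⇑(FreeMonoid.map (stabEmbFin A B hn)))

def stabE1 (A B : DGA) (hn : B.n = A.n + 2) : Fin B.n :=
  Fin.cast hn.symm (⟨A.n, by omega⟩ : Fin (A.n + 2))

def stabE2 (A B : DGA) (hn : B.n = A.n + 2) : Fin B.n :=
  Fin.cast hn.symm (⟨A.n + 1, by omega⟩ : Fin (A.n + 2))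

/-- `B` is the degree-`i` algebraic stabilization of `A`: it is obtained by
adjoining two new free generators `e₁, e₂` with `deg e₁ = i + 1`, `deg e₂ = i`,
`∂e₁ = e₂`, `∂e₂ = 0`, the differential extending that of `A`. -/
def IsStabilizationWith (A : DGA) (i : ℤ) (B : DGA) (hn : B.n = A.n + 2) : Prop :=
  (∀ j, B.deg (stabEmbFin A B hn j) = A.deg j) ∧
  B.deg (stabE1 A B hn) = i + 1 ∧
  B.deg (stabE2 A B hn) = i ∧
  (∀ a, B.D (stabMap A B hn a) = stabMap A B hn (A.D a)) ∧
  B.D (fgen (stabE1 A B hn)) = fgen (stabE2 A B hn) ∧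
  B.D (fgen (stabE2 A B hn)) = 0

def IsStabilization (A : DGA) (i : ℤ) (B : DGA) : Prop :=
  ∃ hn : B.n = A.n + 2, IsStabilizationWith A i B hn

/-- `B` is obtained from `A` by finitely many algebraic stabilizations. -/
def StabChain : DGA → DGA → Prop :=
  Relation.ReflTransGen (fun P Q => ∃ i : ℤ, IsStabilization P i Q)

/-- Two DGAs are stably tame isomorphic if after finitely many stabilizations
of each they become tame isomorphic. -/
def StableTameIso (A B : DGA) : Prop :=
  ∃ A' B', StabChain A A' ∧ StabChain B B' ∧ TameIso A' B'


/-!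
Let `π : A * E^i → A` be the algebra map killing `e₁` and `e₂`. It is a chain map and a left
inverse of the inclusion `ι`, so it suffices that `ι ∘ π` is chain homotopic to the identity.
The homotopy `H` is `ℤ`-linear and defined on words: if `u` consists of letters of `A` and `x`
is the first letter not in `A`, then `H (u x v) = (-1)^|u| u e₁ v` for `x = e₂` and `0` for
`x = e₁`. The identity `∂H + H∂ = id - ι ∘ π` is checked on words by peeling off the first
letter with the Leibniz rule.
-/

open MonoidAlgebra

theorem sgn_add (a b : ℤ) : sgn (a + b) = sgn a * sgn b := by
  rw [sgn, sgn, sgn, zpow_add, Units.val_mul]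

theorem sgn_zero : sgn 0 = 1 := rfl

theorem sgn_add_one (d : ℤ) : sgn (d + 1) = -sgn d := by
  rw [sgn_add, show sgn 1 = -1 from rfl, mul_neg_one]

theorem sgn_sub_one (d : ℤ) : sgn (d - 1) = -sgn d := by
  rw [← neg_neg (sgn (d - 1)), ← sgn_add_one, sub_add_cancel]

theorem sgn_smul_sgn_smul {M : Type*} [AddCommGroup M] (d : ℤ) (y : M) :
    sgn d • sgn d • y = y := by
  rw [smul_smul, sgn, ← Units.val_mul, Int.units_mul_self, Units.val_one, one_smul]

theorem wdeg_of_mul {X : Type} (deg : X → ℤ) (x : X) (w : FreeMonoid X) :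
    wdeg deg (FreeMonoid.of x * w) = deg x + wdeg deg w := by
  simp [wdeg]

theorem fgen_mul_single {X : Type} (x : X) (w : FreeMonoid X) (c : ℤ) :
    fgen x * single w c = single (FreeMonoid.of x * w) c := by
  rw [fgen, of_apply, single_mul_single, one_mul]

theorem homog_iff_mem_supported {X : Type} (deg : X → ℤ) (d : ℤ) (a : FAlg X) :
    Homog deg d a ↔ a ∈ supported ℤ ℤ {w | wdeg deg w = d} :=
  Iff.rfl

theorem homog_single {X : Type} (deg : X → ℤ) (w : FreeMonoid X) (c : ℤ) :
    Homog deg (wdeg deg w) (single w c) := fun v hv => by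
  rw [Finset.mem_singleton.mp (Finsupp.support_single_subset hv)]

theorem homog_fgen {X : Type} (deg : X → ℤ) (x : X) : Homog deg (deg x) (fgen x) := by
  simpa [wdeg, fgen] using homog_single deg (FreeMonoid.of x) 1

theorem homog_one {X : Type} (deg : X → ℤ) : Homog deg 0 (1 : FAlg X) :=
  homog_single deg 1 1

theorem DGA.D_one (A : DGA) : A.D 1 = 0 := by
  have h := A.leibniz 0 1 1 (homog_one A.deg)
  rw [one_mul, mul_one, one_mul, sgn_zero, one_smul] at h
  simpa using h

namespace FAlg

variable {X : Type} {M : Type*} [AddCommGroup M] [Module ℤ M]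

theorem linearMap_apply_eq_of_single (f g : FAlg X →ₗ[ℤ] M)
    (h : ∀ w, f (single w 1) = g (single w 1)) (c : FAlg X) : f c = g c :=
  LinearMap.congr_fun ((basis (FreeMonoid X) ℤ).ext h) c

theorem linearMap_apply_eq_of_cons (f g : FAlg X →ₗ[ℤ] M) (h_one : f 1 = g 1)
    (h_cons : ∀ x w, f (single w 1) = g (single w 1) →
      f (fgen x * single w 1) = g (fgen x * single w 1)) (c : FAlg X) : f c = g c := by
  refine linearMap_apply_eq_of_single f g (fun w => ?_) c
  induction w using FreeMonoid.recOn with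
  | one => exact h_one
  | of_mul x w ih => rw [← fgen_mul_single]; exact h_cons x w ih

end FAlg

def stabHom (A B : DGA) (hn : B.n = A.n + 2) : FAlg (Fin A.n) →ₐ[ℤ] FAlg (Fin B.n) :=
  mapDomainAlgHom ℤ ℤ (FreeMonoid.map (stabEmbFin A B hn))

def stabProj (A B : DGA) : FAlg (Fin B.n) →ₐ[ℤ] FAlg (Fin A.n) :=
  lift ℤ (FAlg (Fin A.n)) (FreeMonoid (Fin B.n)) <|
    FreeMonoid.lift fun x => if hx : (x : ℕ) < A.n then fgen ⟨x, hx⟩ else 0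

def stabHomotopyWord (A B : DGA) (hn : B.n = A.n + 2) : List (Fin B.n) → FAlg (Fin B.n)
  | [] => 0
  | x :: l =>
    if (x : ℕ) < A.n then sgn (B.deg x) • (fgen x * stabHomotopyWord A B hn l)
    else if x = stabE2 A B hn then fgen (stabE1 A B hn) * single (FreeMonoid.ofList l) 1
    else 0

def stabHomotopy (A B : DGA) (hn : B.n = A.n + 2) : FAlg (Fin B.n) →ₗ[ℤ] FAlg (Fin B.n) :=
  (basis (FreeMonoid (Fin B.n)) ℤ).constr ℤ fun w => stabHomotopyWord A B hn w.toList

section Stabilization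

variable {A B : DGA} {hn : B.n = A.n + 2}

theorem stabHom_apply (a : FAlg (Fin A.n)) : stabHom A B hn a = stabMap A B hn a := rfl

theorem stabHom_fgen (j : Fin A.n) : stabHom A B hn (fgen j) = fgen (stabEmbFin A B hn j) := by
  simp [stabHom, fgen]

theorem stabEmbFin_lt (j : Fin A.n) : (stabEmbFin A B hn j : ℕ) < A.n := j.isLt

theorem stabE1_not_lt : ¬ (stabE1 A B hn : ℕ) < A.n := by simp [stabE1]

theorem stabE2_not_lt : ¬ (stabE2 A B hn : ℕ) < A.n := by simp [stabE2]

theorem stabE1_ne_stabE2 : stabE1 A B hn ≠ stabE2 A B hn := by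
  simp [stabE1, stabE2, Fin.ext_iff]

theorem exists_stabEmbFin_eq_or_eq_stabE1_or_eq_stabE2 (x : Fin B.n) :
    (∃ j, stabEmbFin A B hn j = x) ∨ x = stabE1 A B hn ∨ x = stabE2 A B hn := by
  obtain ⟨x, hx⟩ := x
  by_cases hold : x < A.n
  · exact Or.inl ⟨⟨x, hold⟩, rfl⟩
  · right
    simp only [stabE1, stabE2, Fin.ext_iff, Fin.val_cast]
    omega

theorem stabProj_fgen (x : Fin B.n) :
    stabProj A B (fgen x) = if hx : (x : ℕ) < A.n then fgen ⟨x, hx⟩ else 0 := by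
  rw [stabProj, fgen, lift_of, FreeMonoid.lift_eval_of]

theorem stabProj_fgen_stabEmbFin (j : Fin A.n) :
    stabProj A B (fgen (stabEmbFin A B hn j)) = fgen j := by
  rw [stabProj_fgen, dif_pos (stabEmbFin_lt j)]
  rfl

theorem stabProj_fgen_stabE1 : stabProj A B (fgen (stabE1 A B hn)) = 0 := by
  rw [stabProj_fgen, dif_neg stabE1_not_lt]

theorem stabProj_fgen_stabE2 : stabProj A B (fgen (stabE2 A B hn)) = 0 := by
  rw [stabProj_fgen, dif_neg stabE2_not_lt]

theorem stabProj_stabHom (a : FAlg (Fin A.n)) : stabProj A B (stabHom A B hn a) = a := by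
  suffices (stabProj A B).comp (stabHom A B hn) = AlgHom.id ℤ _ from AlgHom.congr_fun this a
  refine algHom_ext' (FreeMonoid.hom_eq fun j => ?_) (Subsingleton.elim _ _)
  exact (congrArg (stabProj A B) (stabHom_fgen j)).trans (stabProj_fgen_stabEmbFin j)

theorem stabHomotopy_single (w : FreeMonoid (Fin B.n)) :
    stabHomotopy A B hn (single w 1) = stabHomotopyWord A B hn w.toList :=
  (basis (FreeMonoid (Fin B.n)) ℤ).constr_basis ℤ _ w

theorem stabHomotopy_one : stabHomotopy A B hn 1 = 0 :=
  stabHomotopy_single 1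

theorem stabHomotopy_fgen_mul_single (x : Fin B.n) (w : FreeMonoid (Fin B.n)) :
    stabHomotopy A B hn (fgen x * single w 1) = stabHomotopyWord A B hn (x :: w.toList) := by
  rw [fgen_mul_single, stabHomotopy_single]
  rfl

theorem stabHomotopy_fgen_stabEmbFin_mul (j : Fin A.n) (c : FAlg (Fin B.n)) :
    stabHomotopy A B hn (fgen (stabEmbFin A B hn j) * c)
      = sgn (B.deg (stabEmbFin A B hn j)) •
          (fgen (stabEmbFin A B hn j) * stabHomotopy A B hn c) := by
  refine FAlg.linearMap_apply_eq_of_single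
    (stabHomotopy A B hn ∘ₗ LinearMap.mulLeft ℤ (fgen (stabEmbFin A B hn j)))
    (sgn (B.deg (stabEmbFin A B hn j)) •
      (LinearMap.mulLeft ℤ (fgen (stabEmbFin A B hn j)) ∘ₗ stabHomotopy A B hn))
    (fun w => ?_) c
  simp only [LinearMap.comp_apply, LinearMap.mulLeft_apply, LinearMap.smul_apply,
    stabHomotopy_fgen_mul_single, stabHomotopy_single, stabHomotopyWord, if_pos (stabEmbFin_lt j)]

theorem stabHomotopy_fgen_stabE1_mul (c : FAlg (Fin B.n)) :
    stabHomotopy A B hn (fgen (stabE1 A B hn) * c) = 0 := by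
  refine FAlg.linearMap_apply_eq_of_single
    (stabHomotopy A B hn ∘ₗ LinearMap.mulLeft ℤ (fgen (stabE1 A B hn))) 0 (fun w => ?_) c
  simp only [LinearMap.comp_apply, LinearMap.mulLeft_apply, LinearMap.zero_apply,
    stabHomotopy_fgen_mul_single, stabHomotopyWord, if_neg stabE1_not_lt,
    if_neg stabE1_ne_stabE2]

theorem stabHomotopy_fgen_stabE2_mul (c : FAlg (Fin B.n)) :
    stabHomotopy A B hn (fgen (stabE2 A B hn) * c) = fgen (stabE1 A B hn) * c := by
  refine FAlg.linearMap_apply_eq_of_single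
    (stabHomotopy A B hn ∘ₗ LinearMap.mulLeft ℤ (fgen (stabE2 A B hn)))
    (LinearMap.mulLeft ℤ (fgen (stabE1 A B hn))) (fun w => ?_) c
  simp only [LinearMap.comp_apply, LinearMap.mulLeft_apply, stabHomotopy_fgen_mul_single,
    stabHomotopyWord, if_neg stabE2_not_lt, ite_true]
  rfl

end Stabilization

namespace IsStabilizationWith

variable {A B : DGA} {i : ℤ} {hn : B.n = A.n + 2}

theorem deg_stabEmbFin (h : IsStabilizationWith A i B hn) (j : Fin A.n) :
    B.deg (stabEmbFin A B hn j) = A.deg j := h.1 j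

theorem deg_stabE1 (h : IsStabilizationWith A i B hn) : B.deg (stabE1 A B hn) = i + 1 := h.2.1

theorem deg_stabE2 (h : IsStabilizationWith A i B hn) : B.deg (stabE2 A B hn) = i := h.2.2.1

theorem D_stabHom (h : IsStabilizationWith A i B hn) (a : FAlg (Fin A.n)) :
    B.D (stabHom A B hn a) = stabHom A B hn (A.D a) := h.2.2.2.1 a

theorem D_fgen_stabE1 (h : IsStabilizationWith A i B hn) :
    B.D (fgen (stabE1 A B hn)) = fgen (stabE2 A B hn) := h.2.2.2.2.1

theorem D_fgen_stabE2 (h : IsStabilizationWith A i B hn) : B.D (fgen (stabE2 A B hn)) = 0 :=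
  h.2.2.2.2.2

theorem stabProj_D (h : IsStabilizationWith A i B hn) (b : FAlg (Fin B.n)) :
    stabProj A B (B.D b) = A.D (stabProj A B b) := by
  refine FAlg.linearMap_apply_eq_of_cons ((stabProj A B).toLinearMap ∘ₗ B.D)
    (A.D ∘ₗ (stabProj A B).toLinearMap) (by simp [DGA.D_one]) (fun x w ih => ?_) b
  simp only [LinearMap.comp_apply, AlgHom.toLinearMap_apply] at ih ⊢
  rw [B.leibniz _ _ _ (homog_fgen B.deg x), map_add, map_smul, map_mul, map_mul, map_mul, ih]
  rcases exists_stabEmbFin_eq_or_eq_stabE1_or_eq_stabE2 (hn := hn) x with ⟨j, rfl⟩ | rfl | rfl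
  · rw [← stabHom_fgen, h.D_stabHom, stabProj_stabHom, stabHom_fgen, stabProj_fgen_stabEmbFin,
      h.deg_stabEmbFin, A.leibniz _ _ _ (homog_fgen A.deg j)]
  · simp [h.D_fgen_stabE1, stabProj_fgen_stabE1, stabProj_fgen_stabE2]
  · simp [h.D_fgen_stabE2, stabProj_fgen_stabE2]

theorem stabHomotopy_stabHom_single_mul (h : IsStabilizationWith A i B hn)
    (v : FreeMonoid (Fin A.n)) (c : FAlg (Fin B.n)) :
    stabHomotopy A B hn (stabHom A B hn (single v 1) * c)
      = sgn (wdeg A.deg v) • (stabHom A B hn (single v 1) * stabHomotopy A B hn c) := by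
  induction v using FreeMonoid.recOn with
  | one => simp [← one_def, wdeg, sgn_zero]
  | of_mul j v ih =>
    rw [← fgen_mul_single, map_mul (stabHom A B hn), stabHom_fgen, mul_assoc,
      stabHomotopy_fgen_stabEmbFin_mul, ih, h.deg_stabEmbFin, wdeg_of_mul, sgn_add, mul_smul_comm,
      mul_assoc, ← mul_smul]

theorem stabHomotopy_stabHom_mul (h : IsStabilizationWith A i B hn) {d : ℤ}
    {u : FAlg (Fin A.n)} (hu : Homog A.deg d u) (c : FAlg (Fin B.n)) :
    stabHomotopy A B hn (stabHom A B hn u * c)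
      = sgn d • (stabHom A B hn u * stabHomotopy A B hn c) := by
  rw [homog_iff_mem_supported, supported_eq_span_single] at hu
  induction hu using Submodule.span_induction with
  | mem _ hv =>
    obtain ⟨v, hv, rfl⟩ := hv
    rw [h.stabHomotopy_stabHom_single_mul, show wdeg A.deg v = _ from hv]
  | zero => simp
  | add u₁ u₂ _ _ ih₁ ih₂ => rw [map_add, add_mul, map_add, ih₁, ih₂, add_mul, smul_add]
  | smul k u _ ih => rw [map_smul, smul_mul_assoc, map_smul, ih, smul_mul_assoc, smul_comm]

theorem stabHomotopy_D_fgen_stabEmbFin_mul (h : IsStabilizationWith A i B hn) (j : Fin A.n)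
    (c : FAlg (Fin B.n)) :
    stabHomotopy A B hn (B.D (fgen (stabEmbFin A B hn j)) * c)
      = -sgn (B.deg (stabEmbFin A B hn j)) •
          (B.D (fgen (stabEmbFin A B hn j)) * stabHomotopy A B hn c) := by
  rw [← stabHom_fgen, h.D_stabHom, h.stabHomotopy_stabHom_mul (A.lowers _ _ (homog_fgen A.deg j)),
    sgn_sub_one, h.deg_stabEmbFin]

theorem D_stabHomotopy_add_stabHomotopy_D (h : IsStabilizationWith A i B hn)
    (b : FAlg (Fin B.n)) :
    B.D (stabHomotopy A B hn b) + stabHomotopy A B hn (B.D b)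
      = b - stabHom A B hn (stabProj A B b) := by
  refine FAlg.linearMap_apply_eq_of_cons
    (B.D ∘ₗ stabHomotopy A B hn + stabHomotopy A B hn ∘ₗ B.D)
    (LinearMap.id - (stabHom A B hn).toLinearMap ∘ₗ (stabProj A B).toLinearMap)
    (by simp [stabHomotopy_one, DGA.D_one]) (fun x w ih => ?_) b
  simp only [LinearMap.add_apply, LinearMap.sub_apply, LinearMap.comp_apply, LinearMap.id_apply,
    AlgHom.toLinearMap_apply] at ih ⊢
  set s : FAlg (Fin B.n) := single w 1
  have hDxs := B.leibniz _ (fgen x) s (homog_fgen B.deg x)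
  rw [map_mul (stabProj A B), map_mul (stabHom A B hn)]
  rcases exists_stabEmbFin_eq_or_eq_stabE1_or_eq_stabE2 (hn := hn) x with ⟨j, rfl⟩ | rfl | rfl
  · set ε := sgn (B.deg (stabEmbFin A B hn j))
    have hDH : B.D (stabHomotopy A B hn (fgen (stabEmbFin A B hn j) * s))
        = ε • (B.D (fgen (stabEmbFin A B hn j)) * stabHomotopy A B hn s)
          + fgen (stabEmbFin A B hn j) * B.D (stabHomotopy A B hn s) := by
      rw [stabHomotopy_fgen_stabEmbFin_mul, map_smul, B.leibniz _ _ _ (homog_fgen B.deg _),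
        smul_add, sgn_smul_sgn_smul]
    have hHD : stabHomotopy A B hn (B.D (fgen (stabEmbFin A B hn j) * s))
        = -ε • (B.D (fgen (stabEmbFin A B hn j)) * stabHomotopy A B hn s)
          + fgen (stabEmbFin A B hn j) * stabHomotopy A B hn (B.D s) := by
      rw [hDxs, map_add, map_smul, h.stabHomotopy_D_fgen_stabEmbFin_mul,
        stabHomotopy_fgen_stabEmbFin_mul, sgn_smul_sgn_smul]
    rw [hDH, hHD, ← stabHom_fgen, stabProj_stabHom, stabHom_fgen, ← mul_sub, ← ih, neg_smul,
      mul_add]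
    abel
  · rw [stabHomotopy_fgen_stabE1_mul, map_zero, zero_add, hDxs, map_add, map_smul,
      stabHomotopy_fgen_stabE1_mul, smul_zero, add_zero, h.D_fgen_stabE1,
      stabHomotopy_fgen_stabE2_mul, stabProj_fgen_stabE1, map_zero, zero_mul, sub_zero]
  -- the two `e₁ ∂s` terms cancel because `e₁` and `e₂` have degrees of opposite parity
  · rw [stabHomotopy_fgen_stabE2_mul, hDxs, h.D_fgen_stabE2, zero_mul, zero_add, map_smul,
      stabHomotopy_fgen_stabE2_mul, B.leibniz _ _ _ (homog_fgen B.deg _), h.D_fgen_stabE1,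
      h.deg_stabE1, h.deg_stabE2, sgn_add_one, stabProj_fgen_stabE2, map_zero, zero_mul,
      sub_zero, add_assoc, ← add_smul, neg_add_cancel, zero_smul, add_zero]

end IsStabilizationWith

/-- the inclusion `A → A * E^i` into the degree-`i` algebraic
stabilization induces an isomorphism on homology: it maps cycles to cycles, a
cycle of `A` mapping to a boundary is already a boundary (injectivity), and
every cycle of the stabilization agrees with the image of a cycle of `A` up to
a boundary (surjectivity). -/
theorem stabilization_homology_iso (A B : DGA) (i : ℤ) (hn : B.n = A.n + 2)
    (h : IsStabilizationWith A i B hn) :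
    (∀ a, A.D a = 0 → B.D (stabMap A B hn a) = 0) ∧
    (∀ a, A.D a = 0 → stabMap A B hn a ∈ LinearMap.range B.D →
      a ∈ LinearMap.range A.D) ∧
    (∀ b, B.D b = 0 → ∃ a, A.D a = 0 ∧
      b - stabMap A B hn a ∈ LinearMap.range B.D) := by
  simp only [← stabHom_apply, LinearMap.mem_range]
  refine ⟨fun a ha => ?cycle, fun a _ ⟨b, hb⟩ => ⟨stabProj A B b, ?injective⟩,
    fun b hb => ⟨stabProj A B b, ?proj_cycle, stabHomotopy A B hn b, ?surjective⟩⟩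
  case cycle => rw [h.D_stabHom, ha, map_zero]
  case injective => rw [← h.stabProj_D, hb, stabProj_stabHom]
  case proj_cycle => rw [← h.stabProj_D, hb, map_zero]
  case surjective => simpa [hb] using h.D_stabHomotopy_add_stabHomotopy_D b
end
end

section
/- A stabilization changes the characteristic algebra by freely adjoining one generator: if (A', ∂') is the degree-i algebraic stabilization of (A, ∂) with new generators e₁, e₂, then the characteristic algebra C(A') is isomorphic to the free product C(A) * ℤ⟨e₁⟩. -/
/- Free unital associative ℤ-algebra on a type `X` of generators,
realized as the monoid algebra of the free monoid on `X`. -/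
noncomputable section

/-- The relation whose `RingQuot` is the quotient of `A` by the two-sided ideal
generated by the differentials of the generators: the characteristic algebra. -/
def charRel (A : DGA) (a b : FAlg (Fin A.n)) : Prop :=
  b = 0 ∧ ∃ i : Fin A.n, a = A.D (fgen i)

/-- The characteristic algebra `C(A) = A / I`, `I` the two-sided ideal generated
by the `∂aᵢ`. -/
abbrev CharAlg (A : DGA) : Type := RingQuot (charRel A)

/-- The characteristic algebra with `d` extra free generators adjoined (and no
new relations): the free algebra on `A.n + d` generators modulo the two-sided
ideal generated by the (images of the) differentials of the original generators. -/
def charExtRel (A : DGA) (d : ℕ) (a b : FAlg (Fin (A.n + d))) : Prop :=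
  b = 0 ∧ ∃ i : Fin A.n,
    a = MonoidAlgebra.mapDomain (⇑(FreeMonoid.map (Fin.castAdd d))) (A.D (fgen i))

abbrev CharExtAlg (A : DGA) (d : ℕ) : Type := RingQuot (charExtRel A d)

/-! Killing `e₂` and keeping `e₁` identifies the two presentations: in `C(A')` the relation
`∂e₁ = e₂` says exactly that `e₂` vanishes, `∂e₂ = 0` imposes nothing, and the remaining
relations `∂aⱼ` are those of `C(A)`. -/

section FreeAlgebraPresentation

variable {X Y : Type} {S : Type} [Semiring S] [Algebra ℤ S]

def falgLift (f : X → S) : FAlg X →ₐ[ℤ] S :=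
  MonoidAlgebra.lift ℤ S (FreeMonoid X) (FreeMonoid.lift f)

@[simp] lemma falgLift_fgen (f : X → S) (x : X) : falgLift f (fgen x) = f x := by
  simp [falgLift, fgen]

lemma falg_algHom_ext {φ ψ : FAlg X →ₐ[ℤ] S} (h : ∀ x, φ (fgen x) = ψ (fgen x)) : φ = ψ :=
  MonoidAlgebra.algHom_ext' (FreeMonoid.hom_eq h) (Subsingleton.elim _ _)

lemma falgLift_comp_fgen (φ : FAlg X →ₐ[ℤ] S) : falgLift (φ ∘ fgen) = φ :=
  falg_algHom_ext (falgLift_fgen _)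

lemma mapDomain_fgen (e : X → Y) (x : X) :
    MonoidAlgebra.mapDomain (⇑(FreeMonoid.map e)) (fgen x) = fgen (e x) := by
  simp [fgen, MonoidAlgebra.of_apply, MonoidAlgebra.mapDomain_single]

lemma falgLift_mapDomain (f : Y → S) (e : X → Y) (a : FAlg X) :
    falgLift f (MonoidAlgebra.mapDomain (⇑(FreeMonoid.map e)) a) = falgLift (f ∘ e) a := by
  change ((falgLift f).comp (MonoidAlgebra.mapDomainAlgHom ℤ ℤ (FreeMonoid.map e))) a = _
  congr 1
  refine falg_algHom_ext fun x => ?_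
  simp [mapDomain_fgen]

variable {r : FAlg X → FAlg X → Prop} {s : FAlg Y → FAlg Y → Prop}

lemma ringQuot_falg_algHom_ext {φ ψ : RingQuot r →ₐ[ℤ] S}
    (h : ∀ x, φ (RingQuot.mkAlgHom ℤ r (fgen x)) = ψ (RingQuot.mkAlgHom ℤ r (fgen x))) :
    φ = ψ :=
  RingQuot.ringQuot_ext' ℤ φ ψ (falg_algHom_ext h)

variable (r) in
def presLift (f : X → S) (hf : ∀ ⦃a b⦄, r a b → falgLift f a = falgLift f b) :
    RingQuot r →ₐ[ℤ] S :=
  RingQuot.liftAlgHom ℤ ⟨falgLift f, hf⟩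

@[simp] lemma presLift_mkAlgHom (f : X → S)
    (hf : ∀ ⦃a b⦄, r a b → falgLift f a = falgLift f b) (a : FAlg X) :
    presLift r f hf (RingQuot.mkAlgHom ℤ r a) = falgLift f a :=
  RingQuot.liftAlgHom_mkAlgHom_apply ℤ _ _ a

def presAlgEquiv (f : X → RingQuot s) (g : Y → RingQuot r)
    (hf : ∀ ⦃a b⦄, r a b → falgLift f a = falgLift f b)
    (hg : ∀ ⦃a b⦄, s a b → falgLift g a = falgLift g b)
    (hgf : ∀ x, presLift s g hg (f x) = RingQuot.mkAlgHom ℤ r (fgen x))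
    (hfg : ∀ y, presLift r f hf (g y) = RingQuot.mkAlgHom ℤ s (fgen y)) :
    RingQuot r ≃ₐ[ℤ] RingQuot s :=
  AlgEquiv.ofAlgHom (presLift r f hf) (presLift s g hg)
    (ringQuot_falg_algHom_ext fun y => by simp [hfg])
    (ringQuot_falg_algHom_ext fun x => by simp [hgf])

end FreeAlgebraPresentation

lemma map_eq_map_of_charRel {S : Type} [Semiring S] [Algebra ℤ S] (A : DGA)
    (φ : FAlg (Fin A.n) →ₐ[ℤ] S) (h : ∀ k, φ (A.D (fgen k)) = 0) :
    ∀ ⦃a b⦄, charRel A a b → φ a = φ b := by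
  rintro _ _ ⟨rfl, k, rfl⟩
  rw [h, map_zero]

lemma map_eq_map_of_charExtRel {S : Type} [Semiring S] [Algebra ℤ S] (A : DGA) (d : ℕ)
    (φ : FAlg (Fin (A.n + d)) →ₐ[ℤ] S)
    (h : ∀ k,
      φ (MonoidAlgebra.mapDomain (⇑(FreeMonoid.map (Fin.castAdd d))) (A.D (fgen k))) = 0) :
    ∀ ⦃a b⦄, charExtRel A d a b → φ a = φ b := by
  rintro _ _ ⟨rfl, k, rfl⟩
  rw [h, map_zero]

section Stabilization

variable (A B : DGA) (hn : B.n = A.n + 2)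

def stabIncl (j : Fin (A.n + 1)) : Fin B.n := Fin.cast hn.symm j.castSucc

lemma stabIncl_castSucc (j : Fin A.n) : stabIncl A B hn j.castSucc = stabEmbFin A B hn j := rfl

lemma stabIncl_last : stabIncl A B hn (Fin.last A.n) = stabE1 A B hn := rfl

lemma stabMap_fgen (j : Fin A.n) : stabMap A B hn (fgen j) = fgen (stabEmbFin A B hn j) :=
  mapDomain_fgen _ j

@[elab_as_elim]
lemma stab_induction {P : Fin B.n → Prop} (incl : ∀ j, P (stabIncl A B hn j))
    (e2 : P (stabE2 A B hn)) (k : Fin B.n) : P k := by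
  obtain ⟨k, rfl⟩ := (finCongr hn.symm).surjective k
  induction k using Fin.lastCases with
  | last => exact e2
  | cast j => exact incl j

def stabToExtGen (k : Fin B.n) : CharExtAlg A 1 :=
  Fin.lastCases 0 (fun j => RingQuot.mkAlgHom ℤ (charExtRel A 1) (fgen j)) (Fin.cast hn k)

def extToStabGen (j : Fin (A.n + 1)) : CharAlg B :=
  RingQuot.mkAlgHom ℤ (charRel B) (fgen (stabIncl A B hn j))

@[simp] lemma stabToExtGen_stabIncl (j : Fin (A.n + 1)) :
    stabToExtGen A B hn (stabIncl A B hn j) = RingQuot.mkAlgHom ℤ (charExtRel A 1) (fgen j) := by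
  simp [stabToExtGen, stabIncl]

@[simp] lemma stabToExtGen_stabE2 : stabToExtGen A B hn (stabE2 A B hn) = 0 := by
  have : Fin.cast hn (stabE2 A B hn) = Fin.last (A.n + 1) := rfl
  simp [stabToExtGen, this]

lemma stabToExtGen_comp_stabEmbFin :
    stabToExtGen A B hn ∘ stabEmbFin A B hn
      = (RingQuot.mkAlgHom ℤ (charExtRel A 1) ∘ fgen) ∘ Fin.castAdd 1 :=
  funext fun j => stabToExtGen_stabIncl A B hn j.castSucc

lemma extToStabGen_comp_castAdd :
    extToStabGen A B hn ∘ Fin.castAdd 1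
      = (RingQuot.mkAlgHom ℤ (charRel B) ∘ fgen) ∘ stabEmbFin A B hn :=
  rfl

variable {A B hn} {i : ℤ}

lemma mkAlgHom_fgen_stabE2 (hs : IsStabilizationWith A i B hn) :
    RingQuot.mkAlgHom ℤ (charRel B) (fgen (stabE2 A B hn)) = 0 := by
  rw [← hs.2.2.2.2.1]
  exact (RingQuot.mkAlgHom_rel ℤ ⟨rfl, stabE1 A B hn, rfl⟩).trans (map_zero _)

lemma falgLift_stabToExtGen_eq_of_charRel (hs : IsStabilizationWith A i B hn)
    ⦃a b : FAlg (Fin B.n)⦄ (hab : charRel B a b) :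
    falgLift (stabToExtGen A B hn) a = falgLift (stabToExtGen A B hn) b := by
  obtain ⟨-, -, -, hcomm, hDe1, hDe2⟩ := hs
  refine map_eq_map_of_charRel B _ (fun k => ?_) hab
  induction k using stab_induction A B hn with
  | e2 => rw [hDe2, map_zero]
  | incl j =>
    induction j using Fin.lastCases with
    | last => rw [stabIncl_last, hDe1, falgLift_fgen, stabToExtGen_stabE2]
    | cast j =>
      rw [stabIncl_castSucc, ← stabMap_fgen, hcomm, stabMap, falgLift_mapDomain,
        stabToExtGen_comp_stabEmbFin, ← falgLift_mapDomain, falgLift_comp_fgen]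
      exact (RingQuot.mkAlgHom_rel ℤ ⟨rfl, j, rfl⟩).trans (map_zero _)

lemma falgLift_extToStabGen_eq_of_charExtRel (hs : IsStabilizationWith A i B hn)
    ⦃a b : FAlg (Fin (A.n + 1))⦄ (hab : charExtRel A 1 a b) :
    falgLift (extToStabGen A B hn) a = falgLift (extToStabGen A B hn) b := by
  refine map_eq_map_of_charExtRel A 1 _ (fun k => ?_) hab
  rw [falgLift_mapDomain, extToStabGen_comp_castAdd, ← falgLift_mapDomain, falgLift_comp_fgen,
    ← stabMap, ← hs.2.2.2.1, stabMap_fgen]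
  exact (RingQuot.mkAlgHom_rel ℤ ⟨rfl, _, rfl⟩).trans (map_zero _)

end Stabilization

/-- a stabilization changes the characteristic algebra by freely
adjoining one generator: if `B` is the degree-`i` algebraic stabilization of
`A` (with new generators `e₁, e₂`), then `C(B)` is isomorphic to `C(A)` with
one free generator adjoined, i.e. to the free product `C(A) * ℤ⟨e₁⟩`. -/
theorem stabilization_char_algebra (A B : DGA) (i : ℤ)
    (h : IsStabilization A i B) :
    Nonempty (CharAlg B ≃+* CharExtAlg A 1) := by
  obtain ⟨hn, hs⟩ := h
  refine ⟨(presAlgEquiv (stabToExtGen A B hn) (extToStabGen A B hn)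
    (falgLift_stabToExtGen_eq_of_charRel hs) (falgLift_extToStabGen_eq_of_charExtRel hs)
    (fun k => ?_) (fun j => ?_)).toRingEquiv⟩
  · induction k using stab_induction A B hn with
    | incl j => simp [extToStabGen]
    | e2 => rw [stabToExtGen_stabE2, map_zero, mkAlgHom_fgen_stabE2 hs]
  · simp [extToStabGen]
end
end

section
/- With the same conventions, define the degree-2 generator a₂(x) with ∂a₂(x) = μ a₂₁(x, u⁺ₓ) + μ a₁₂(u⁻ₓ, x) − a₁₁(u⁻ₓ, oₓ) a₁₂(oₓ, x). Then ∂(∂a₂(x)) = 0, using the convention a₁₁(i,i) = 1 + μ. -/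
/- The free unital associative algebra over the Laurent polynomial ring
`ℤ[μ, μ⁻¹]` (with `μ` central) on a type `X` of generators, realized as the
monoid algebra of the free monoid on `X`. -/
noncomputable section

abbrev LR : Type := LaurentPolynomial ℤ

abbrev LAlg (X : Type) : Type := MonoidAlgebra LR (FreeMonoid X)

/-- The central invertible scalar `μ`. -/
def μL {X : Type} : LAlg X := algebraMap LR (LAlg X) (LaurentPolynomial.T 1)

/-- An element is homogeneous of degree `d` if every word in its support has
degree `d`. -/
def LHomog {X : Type} (deg : X → ℤ) (d : ℤ) (a : LAlg X) : Prop :=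
  ∀ w ∈ a.coeff.support, wdeg deg w = d

/-- The signed Leibniz rule for a linear map on `LAlg X`. -/
def LLeibniz {X : Type} (deg : X → ℤ) (D : LAlg X →ₗ[LR] LAlg X) : Prop :=
  ∀ (d : ℤ) (v w : LAlg X), LHomog deg d v →
    D (v * w) = D v * w + sgn d • (v * D w)

/- Applying `∂` to `∂a₂(x)`, every `a₁₁` factor passes through `∂` (Leibniz in degree 0 with
`∂a₁₁ = 0`), and after substituting `1 + μ` for the diagonal entries at `u⁺ₓ`, `u⁻ₓ`, `oₓ` the
terms cancel in pairs. For `i = u⁺ₓ, u⁻ₓ` the pairs `μ a₁₁(u⁻ₓ,oₓ) a₁₁(oₓ,i)` and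
`a₁₁(u⁻ₓ,oₓ) μ a₁₁(oₓ,i)` cancel because `μ` is central. -/

lemma LLeibniz.map_mul_of_map_eq_zero {X : Type} {deg : X → ℤ} {D : LAlg X →ₗ[LR] LAlg X}
    (hL : LLeibniz deg D) {v : LAlg X} (hv : LHomog deg 0 v) (hDv : D v = 0) (w : LAlg X) :
    D (v * w) = v * D w := by
  rw [hL 0 v w hv, hDv, zero_mul, zero_add]
  exact one_smul ℤ _

lemma map_μL_mul {X : Type} (D : LAlg X →ₗ[LR] LAlg X) (a : LAlg X) :
    D (μL * a) = μL * D a :=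
  D.map_algebraMap_mul a _

lemma commute_μL {X : Type} (a : LAlg X) : Commute μL a :=
  Algebra.commute_algebraMap_left _ a

-- `∂∂a₂(x)` expanded, with `a, b, c, d = a₁₁(u⁻ₓ,oₓ), a₁₁(oₓ,u⁻ₓ), a₁₁(oₓ,u⁺ₓ), a₁₁(u⁻ₓ,u⁺ₓ)`.
lemma roseman_cancellation {R : Type*} [Ring R] {μ a : R} (hμa : Commute μ a) (b c d : R) :
    μ * (μ * d + (1 + μ) - a * c) + μ * (-(1 + μ) - μ * d + a * b)
      - a * (-b - μ * c + (1 + μ) * b) = 0 := by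
  linear_combination (norm := noncomm_ring) hμa.eq * (b - c)

theorem roseman_d_squared_a2_general
    {X S C : Type} (deg : X → ℤ) (o up um : C → S)
    (D : LAlg X →ₗ[LR] LAlg X) (hL : LLeibniz deg D)
    (A11 : S → S → LAlg X) (A21 : C → S → LAlg X) (A12 : S → C → LAlg X)
    (h11 : ∀ i j, LHomog deg 0 (A11 i j))
    (hdiag : ∀ i, A11 i i = 1 + μL)
    (hD11 : ∀ i j, D (A11 i j) = 0)
    (hD21 : ∀ x i, D (A21 x i) =
      μL * A11 (um x) i + A11 (up x) i - A11 (um x) (o x) * A11 (o x) i)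
    (hD12 : ∀ i x, D (A12 i x) =
      -(A11 i (um x)) - μL * A11 i (up x) + A11 i (o x) * A11 (o x) (um x))
    (A2 : C → LAlg X)
    (hD2 : ∀ x, D (A2 x) =
      μL * A21 x (up x) + μL * A12 (um x) x - A11 (um x) (o x) * A12 (o x) x) :
    ∀ x : C, D (D (A2 x)) = 0 := by
  intro x
  rw [hD2, map_sub, map_add, map_μL_mul, map_μL_mul,
    hL.map_mul_of_map_eq_zero (h11 _ _) (hD11 _ _), hD21, hD12, hD12,
    hdiag (up x), hdiag (um x), hdiag (o x)]
  exact roseman_cancellation (commute_μL _) _ _ _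

/-- with the conventions of the Roseman DGA (in particular the
convention `a₁₁(i,i) = 1 + μ` for the diagonal degree-0 entries), the degree-2
generators `a₂(x)` with
`∂a₂(x) = μ a₂₁(x,u⁺ₓ) + μ a₁₂(u⁻ₓ,x) − a₁₁(u⁻ₓ,oₓ) a₁₂(oₓ,x)`
satisfy `∂(∂a₂(x)) = 0`. -/
theorem roseman_d_squared_a2
    {X S C : Type} (deg : X → ℤ) (o up um : C → S)
    (D : LAlg X →ₗ[LR] LAlg X) (hL : LLeibniz deg D)
    (A11 : S → S → LAlg X) (A21 : C → S → LAlg X) (A12 : S → C → LAlg X)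
    (h11 : ∀ i j, LHomog deg 0 (A11 i j))
    (h21 : ∀ x i, LHomog deg 1 (A21 x i))
    (h12 : ∀ i x, LHomog deg 1 (A12 i x))
    (hdiag : ∀ i, A11 i i = 1 + μL)
    (hD11 : ∀ i j, D (A11 i j) = 0)
    (hD21 : ∀ x i, D (A21 x i) =
      μL * A11 (um x) i + A11 (up x) i - A11 (um x) (o x) * A11 (o x) i)
    (hD12 : ∀ i x, D (A12 i x) =
      -(A11 i (um x)) - μL * A11 i (up x) + A11 i (o x) * A11 (o x) (um x))
    (A2 : C → LAlg X)
    (h2 : ∀ x, LHomog deg 2 (A2 x))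
    (hD2 : ∀ x, D (A2 x) =
      μL * A21 x (up x) + μL * A12 (um x) x - A11 (um x) (o x) * A12 (o x) x) :
    ∀ x : C, D (D (A2 x)) = 0 :=
  roseman_d_squared_a2_general deg o up um D hL A11 A21 A12 h11 hdiag hD11 hD21 hD12 A2 hD2
end
end
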